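/- arXiv:2605.09815 — 6 statements merged into one kernel-verified Lean document; each statement's English description precedes it below -/
import Mathlib

section
/- Let c, d, k, ℓ be positive integers. There exists a recolouring from F_c^(k) to F_d^(ℓ) if and only if k ≤ ⌈ℓ / ⌈c/d⌉⌉. -/
/-- `r : Fin c → Fin d` is a recolouring from the clique family `F_c^(k)` to `F_d^(ℓ)`:
every tuple `g : Fin ℓ → Fin c` on which `r ∘ g` is constant contains some colour
at least `k` times. -/
def IsRecolouring (c d k ℓ : ℕ) (r : Fin c → Fin d) : Prop :=
  ∀ g : Fin ℓ → Fin c, (∃ j : Fin d, ∀ i, r (g i) = j) →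
    ∃ a : Fin c, k ≤ (Finset.univ.filter fun i => g i = a).card

/-!
Write `q = ⌈c/d⌉`. Some fibre of any `r : Fin c → Fin d` has at least `q` colours; cycling
through them, an `ℓ`-tuple can use each colour at most `⌈ℓ/q⌉` times, which bounds `k`.
Conversely, if `r` has all fibres of size at most `q` (e.g. `r i = i mod d`), every tuple
inside one fibre repeats some colour at least `⌈ℓ/q⌉` times by pigeonhole.
-/

open Finset

lemma lt_ceilDiv_iff_mul_lt {a b n : ℕ} (ha : 0 < a) : n < b ⌈/⌉ a ↔ a * n < b := by
  rw [← not_le, ← not_le, ceilDiv_le_iff_le_mul ha]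

lemma ceilDiv_le_ceilDiv_left {a b c : ℕ} (hcb : c ≤ b) (hc : 0 < c) : a ⌈/⌉ b ≤ a ⌈/⌉ c := by
  rw [ceilDiv_le_iff_le_mul (hc.trans_le hcb)]
  exact (le_smul_ceilDiv hc).trans (Nat.mul_le_mul_right _ hcb)

lemma exists_ceilDiv_le_card_fiber {α β : Type*} [Fintype α] [Nonempty α] [DecidableEq β]
    {t : Finset β} {f : α → β} (hf : ∀ x, f x ∈ t) :
    ∃ y ∈ t, Fintype.card α ⌈/⌉ #t ≤ #{x | f x = y} := by
  have ht : 0 < #t := card_pos.2 ⟨_, hf (Classical.arbitrary α)⟩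
  have hpos : 0 < Fintype.card α ⌈/⌉ #t := by
    rw [lt_ceilDiv_iff_mul_lt ht, mul_zero]
    exact Fintype.card_pos
  have hlt : #t * (Fintype.card α ⌈/⌉ #t - 1) < #(univ : Finset α) := by
    rw [card_univ, ← lt_ceilDiv_iff_mul_lt ht]
    exact Nat.sub_lt hpos one_pos
  obtain ⟨y, hy, hfib⟩ := exists_lt_card_fiber_of_mul_lt_card_of_maps_to (fun x _ => hf x) hlt
  exact ⟨y, hy, by omega⟩

lemma exists_map_card_fiber_le_ceilDiv {β : Type*} [DecidableEq β] (n : ℕ) {S : Finset β}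
    (hS : S.Nonempty) :
    ∃ g : Fin n → β, (∀ i, g i ∈ S) ∧ ∀ y, #{i | g i = y} ≤ n ⌈/⌉ #S := by
  have hm := card_pos.2 hS
  let g : Fin n → β := fun i => S.equivFin.symm ⟨i % #S, Nat.mod_lt _ hm⟩
  refine ⟨g, fun i => (S.equivFin.symm _).2, fun y => ?_⟩
  calc #{i | g i = y} ≤ #(range (n ⌈/⌉ #S)) := by
        refine card_le_card_of_injOn (fun i => (i : ℕ) / #S) (fun i _ => ?_) ?_
        · rw [coe_range, Set.mem_Iio, lt_ceilDiv_iff_mul_lt hm]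
          exact (Nat.mul_div_le _ _).trans_lt i.2
        · intro i hi i' hi' hdiv
          have hmod : (i : ℕ) % #S = (i' : ℕ) % #S := by
            have hg : g i = g i' := (mem_filter.1 hi).2.trans (mem_filter.1 hi').2.symm
            exact congrArg Fin.val (S.equivFin.symm.injective (Subtype.ext hg))
          exact Fin.ext (Nat.ext_div_modEq hdiv hmod)
    _ = n ⌈/⌉ #S := card_range _

theorem recolouring_exists_iff_general (c d k ℓ : ℕ)
    (hc : 0 < c) (hd : 0 < d) (hl : 0 < ℓ) :
    (∃ r : Fin c → Fin d, IsRecolouring c d k ℓ r) ↔ k ≤ ℓ ⌈/⌉ (c ⌈/⌉ d) := by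
  have : Nonempty (Fin c) := ⟨⟨0, hc⟩⟩
  have : Nonempty (Fin d) := ⟨⟨0, hd⟩⟩
  have : Nonempty (Fin ℓ) := ⟨⟨0, hl⟩⟩
  constructor
  · rintro ⟨r, hr⟩
    obtain ⟨j, -, hj⟩ := exists_ceilDiv_le_card_fiber (t := univ) (f := r) (fun _ => mem_univ _)
    rw [card_univ, Fintype.card_fin, Fintype.card_fin] at hj
    have hq : 0 < c ⌈/⌉ d := (lt_ceilDiv_iff_mul_lt hd).2 (by rwa [mul_zero])
    obtain ⟨g, hgS, hg⟩ := exists_map_card_fiber_le_ceilDiv ℓ (card_pos.1 (hq.trans_le hj))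
    obtain ⟨a, ha⟩ := hr g ⟨j, fun i => (mem_filter.1 (hgS i)).2⟩
    exact ha.trans ((hg a).trans (ceilDiv_le_ceilDiv_left hj hq))
  · intro hk
    obtain ⟨r, -, hr⟩ := exists_map_card_fiber_le_ceilDiv c (univ_nonempty (α := Fin d))
    refine ⟨r, fun g ⟨j, hj⟩ => ?_⟩
    obtain ⟨a, haT, ha⟩ :=
      exists_ceilDiv_le_card_fiber (t := {x | r x = j}) (f := g) (by simp [hj])
    have hT := hr j
    rw [card_univ, Fintype.card_fin] at hT
    rw [Fintype.card_fin] at ha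
    exact ⟨a, hk.trans ((ceilDiv_le_ceilDiv_left hT (card_pos.2 ⟨a, haT⟩)).trans ha)⟩

theorem recolouring_exists_iff (c d k ℓ : ℕ)
    (hc : 0 < c) (hd : 0 < d) (hk : 0 < k) (hl : 0 < ℓ) :
    (∃ r : Fin c → Fin d, IsRecolouring c d k ℓ r) ↔ k ≤ ℓ ⌈/⌉ (c ⌈/⌉ d) :=
  recolouring_exists_iff_general c d k ℓ hc hd hl
end

section
/- Let c, d, k, ℓ be positive integers with k ≤ ⌈ℓ / ⌈c/d⌉⌉. Then every map r : Fin c → Fin d all of whose fibres r⁻¹(j) have size at most ⌈c/d⌉ is a recolouring from F_c^(k) to F_d^(ℓ); moreover, at least one such map r exists. -/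
theorem small_fibres_recolouring (c d k ℓ : ℕ)
    (hc : 0 < c) (hd : 0 < d) (hk : 0 < k) (hl : 0 < ℓ)
    (hcond : k ≤ ℓ ⌈/⌉ (c ⌈/⌉ d)) :
    (∀ r : Fin c → Fin d,
      (∀ j : Fin d, (Finset.univ.filter fun a => r a = j).card ≤ c ⌈/⌉ d) →
      IsRecolouring c d k ℓ r) ∧
    (∃ r : Fin c → Fin d,
      ∀ j : Fin d, (Finset.univ.filter fun a => r a = j).card ≤ c ⌈/⌉ d) := by
  set m := c ⌈/⌉ d with hm
  have hmpos : 0 < m := by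
    by_contra h
    push_neg at h
    interval_cases m
    have := le_smul_ceilDiv (b := c) hd
    rw [← hm] at this
    simp at this
    omega
  set t := ℓ ⌈/⌉ m with ht
  constructor
  · intro r hr g ⟨j, hj⟩
    set S := Finset.univ.filter fun a => r a = j with hS
    have hsum : ∀ i ∈ (Finset.univ : Finset (Fin ℓ)), g i ∈ S := by
      intro i _; simp [hS, hj i]
    have hcard := Finset.card_eq_sum_card_fiberwise hsum
    simp only [Finset.card_univ, Fintype.card_fin] at hcard
    by_contra h
    push_neg at h
    have hle : ∀ a ∈ S, (Finset.univ.filter fun i => g i = a).card ≤ t - 1 := by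
      intro a _
      have := h a
      omega
    have : ℓ ≤ S.card * (t - 1) := by
      rw [hcard]
      calc ∑ a ∈ S, (Finset.univ.filter fun i => g i = a).card
          ≤ ∑ _a ∈ S, (t - 1) := Finset.sum_le_sum hle
        _ = S.card * (t - 1) := by rw [Finset.sum_const, smul_eq_mul]
    have h2 : ℓ ≤ m * (t - 1) := le_trans this (Nat.mul_le_mul_right _ (hr j))
    have h3 : t ≤ t - 1 := (ceilDiv_le_iff_le_smul hmpos).2 (by simpa using h2)
    omega
  · refine ⟨fun a => ⟨a.val / m, ?_⟩, ?_⟩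
    · have hcm : c ≤ d * m := by simpa using le_smul_ceilDiv (b := c) hd
      have : a.val < d * m := lt_of_lt_of_le a.isLt hcm
      exact Nat.div_lt_of_lt_mul (by rwa [mul_comm] at this)
    · intro j
      refine le_trans (Finset.card_le_card_of_injOn (fun a => a.val % m) ?_ ?_)
        (le_of_eq (Finset.card_range m))
      · intro a _
        simp [Nat.mod_lt _ hmpos]
      · intro a ha b hb hab
        simp only [Finset.mem_coe, Finset.mem_filter, Fin.mk.injEq] at ha hb
        have h1 : a.val / m = j.val := by
          have := ha.2; exact congrArg Fin.val this
        have h2 : b.val / m = j.val := by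
          have := hb.2; exact congrArg Fin.val this
        have : a.val = b.val := by
          conv_lhs => rw [← Nat.div_add_mod a.val m]
          conv_rhs => rw [← Nat.div_add_mod b.val m]
          simp only at hab
          rw [h1, h2, hab]
        exact Fin.ext this
end

section
/- Let c, k, ℓ be positive integers with ℓ < c·(k−1). Then the relation U(c,k,ℓ) is reconfigurable: its reconfiguration graph is connected, i.e. any tuple of U(c,k,ℓ) can be transformed into any other by changing one coordinate at a time while remaining inside U(c,k,ℓ) at every step. -/
/-- The reconfiguration graph of a relation `R ⊆ A^r`: vertices are the tuples of `R`,
two tuples being adjacent iff they differ in exactly one coordinate. -/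
def reconfGraph {A : Type*} {r : ℕ} (R : Set (Fin r → A)) : SimpleGraph R where
  Adj x y := ∃! i : Fin r, x.1 i ≠ y.1 i
  symm := by
    constructor
    rintro x y ⟨i, hi, hu⟩
    exact ⟨i, Ne.symm hi, fun j hj => hu j (Ne.symm hj)⟩
  loopless := by
    constructor
    rintro x ⟨i, hi, -⟩
    exact hi rfl

/-!
Induct on the Hamming distance to the target tuple `y`. At a position `i` where `x i ≠ y i`,
recolour `i` to `y i`. This is blocked only when `y i` already occurs `k - 1` times in `x`;
since `y` has at most `k - 1` occurrences of `y i`, one of them at `i`, some position `j`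
has `x j = y i ≠ y j`. Because `ℓ < c (k - 1)`, some colour `b` occurs fewer than `k - 1` times
in `x`, so `j` can first be recoloured to `b`, after which `i` can be recoloured to `y i`.
Both moves only touch positions where `x` and `y` differ.
-/

open Finset Function

theorem hammingDist_lt_of_apply_eq {ι : Type*} {β : ι → Type*} [Fintype ι]
    [∀ i, DecidableEq (β i)] {x y z : ∀ i, β i} {i : ι} (hi : x i ≠ y i) (hzi : z i = y i)
    (hchange : ∀ j, z j ≠ x j → x j ≠ y j) : hammingDist z y < hammingDist x y := by
  refine card_lt_card ((ssubset_iff_of_subset fun j hj => ?_).2 ⟨i, ?_, ?_⟩) <;>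
    simp only [mem_filter, mem_univ, true_and] at *
  · by_cases hzx : z j = x j
    · rwa [← hzx]
    · exact hchange j hzx
  · exact hi
  · exact not_not.2 hzi

section ColourCount

variable {ι A : Type*} [Fintype ι] [DecidableEq A]

def colourCount (x : ι → A) (a : A) : ℕ := #{i | x i = a}

variable (ι A) in
def colourBounded (k : ℕ) : Set (ι → A) := {x | ∀ a, colourCount x a < k}

theorem colourCount_update_add [DecidableEq ι] (x : ι → A) (i : ι) (a b : A) :
    colourCount (update x i a) b + (if x i = b then 1 else 0) =
      colourCount x b + (if a = b then 1 else 0) := by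
  have hrest : ∑ j ∈ univ.erase i, (if update x i a j = b then 1 else 0) =
      ∑ j ∈ univ.erase i, (if x j = b then 1 else 0) :=
    sum_congr rfl fun j hj => by rw [update_of_ne (ne_of_mem_erase hj)]
  simp only [colourCount, card_filter]
  rw [← add_sum_erase univ _ (mem_univ i), ← add_sum_erase univ _ (mem_univ i), hrest,
    update_self]
  ring

theorem update_mem_colourBounded [DecidableEq ι] {k : ℕ} {x : ι → A}
    (hx : x ∈ colourBounded ι A k) {a : A} (ha : colourCount x a + 1 < k) (i : ι) :
    update x i a ∈ colourBounded ι A k := by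
  intro b
  have := colourCount_update_add x i a b
  have := hx b
  split_ifs at * <;> subst_vars <;> omega

theorem exists_apply_eq_and_apply_ne_of_colourCount_le {x y : ι → A} {a : A}
    (hle : colourCount y a ≤ colourCount x a) {i : ι} (hyi : y i = a) (hxi : x i ≠ a) :
    ∃ j, x j = a ∧ y j ≠ a := by
  by_contra! hsub
  refine hle.not_gt (card_lt_card ((ssubset_iff_of_subset fun j hj => ?_).2 ⟨i, ?_, ?_⟩)) <;>
    simp only [mem_filter, mem_univ, true_and] at *
  exacts [hsub j hj, hyi, hxi]

theorem colourBounded_nonempty [Fintype A] {k : ℕ}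
    (h : Fintype.card ι < Fintype.card A * (k - 1)) : (colourBounded ι A k).Nonempty := by
  obtain ⟨e⟩ : Nonempty (ι ↪ A × Fin (k - 1)) :=
    Function.Embedding.nonempty_of_card_le (by simpa using h.le)
  have hk : k - 1 ≠ 0 := by
    rintro hk
    simp [hk] at h
  refine ⟨fun i => (e i).1, fun a => ?_⟩
  have : colourCount (fun i => (e i).1) a ≤ k - 1 := by
    simpa [colourCount] using card_le_card_of_injOn (t := univ) (fun i => (e i).2)
      (fun _ _ => mem_univ _) fun i hi j hj hij =>
        e.injective (Prod.ext ((mem_filter.1 hi).2.trans (mem_filter.1 hj).2.symm) hij)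
  omega

theorem exists_recolour_of_saturated [Fintype A] [DecidableEq ι] {k : ℕ}
    (h : Fintype.card ι < Fintype.card A * (k - 1)) {x y : ι → A}
    (hx : x ∈ colourBounded ι A k) (hy : y ∈ colourBounded ι A k) {i : ι} (hi : x i ≠ y i)
    (hsat : k ≤ colourCount x (y i) + 1) :
    ∃ j b, x j = y i ∧ y j ≠ y i ∧ x j ≠ b ∧ colourCount x b + 1 < k ∧
      colourCount (update x j b) (y i) + 1 < k := by
  obtain ⟨b, hb⟩ := Fintype.exists_card_fiber_lt_of_card_lt_mul (f := x) h
  change colourCount x b < k - 1 at hb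
  obtain ⟨j, hxj, hyj⟩ := exists_apply_eq_and_apply_ne_of_colourCount_le
    (by have := hy (y i); omega) rfl hi
  have hbj : x j ≠ b := by
    rintro hxb
    rw [← hxb, hxj] at hb
    omega
  refine ⟨j, b, hxj, hyj, hbj, by omega, ?_⟩
  have := colourCount_update_add x j b (y i)
  rw [if_pos hxj, if_neg (hxj ▸ hbj.symm)] at this
  have := hx (y i)
  omega

end ColourCount

section Reconfiguration

variable {A : Type*} {r : ℕ} {R : Set (Fin r → A)}

theorem reconfGraph_adj_update {x : Fin r → A} (hx : x ∈ R) {i : Fin r} {a : A}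
    (hu : update x i a ∈ R) (ha : x i ≠ a) :
    (reconfGraph R).Adj ⟨x, hx⟩ ⟨update x i a, hu⟩ := by
  refine ⟨i, by simpa using ha, fun j hj => ?_⟩
  by_contra hji
  exact hj (update_of_ne hji a x).symm

theorem reconfGraph_connected_of_exists_closer [DecidableEq A] (hne : R.Nonempty)
    (H : ∀ x y : R, x ≠ y →
      ∃ z : R, (reconfGraph R).Reachable x z ∧ hammingDist z.1 y.1 < hammingDist x.1 y.1) :
    (reconfGraph R).Connected := by
  have := hne.to_subtype
  refine ⟨fun x y => ?_⟩
  induction hd : hammingDist x.1 y.1 using Nat.strong_induction_on generalizing x with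
  | _ n ih =>
    by_cases hxy : x = y
    · exact hxy ▸ .refl _
    obtain ⟨z, hxz, hz⟩ := H x y hxy
    exact hxz.trans (ih _ (hd ▸ hz) z rfl)

theorem colourBounded_exists_closer [Fintype A] [DecidableEq A] {k : ℕ}
    (h : r < Fintype.card A * (k - 1)) (x y : colourBounded (Fin r) A k) (hxy : x ≠ y) :
    ∃ z : colourBounded (Fin r) A k,
      (reconfGraph (colourBounded (Fin r) A k)).Reachable x z ∧
        hammingDist z.1 y.1 < hammingDist x.1 y.1 := by
  rcases x with ⟨x, hx⟩
  rcases y with ⟨y, hy⟩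
  obtain ⟨i, hi⟩ : ∃ i, x i ≠ y i := by
    by_contra! H
    exact hxy (Subtype.ext (funext H))
  by_cases hfree : colourCount x (y i) + 1 < k
  · have hu := update_mem_colourBounded hx hfree i
    refine ⟨⟨_, hu⟩, (reconfGraph_adj_update hx hu hi).reachable,
      hammingDist_lt_of_apply_eq hi (update_self ..) fun m hm => ?_⟩
    rwa [not_imp_comm.1 (update_of_ne · _ x) hm]
  obtain ⟨j, b, hxj, hyj, hbj, hb, hfree'⟩ :=
    exists_recolour_of_saturated (by simpa using h) hx hy hi (not_lt.1 hfree)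
  have hji : j ≠ i := by
    rintro rfl
    exact hi hxj
  have hx' := update_mem_colourBounded hx hb j
  have hx'' := update_mem_colourBounded hx' hfree' i
  have hx'i : update x j b i ≠ y i := by rwa [update_of_ne hji.symm]
  refine ⟨⟨_, hx''⟩, (reconfGraph_adj_update hx hx' hbj).reachable.trans
      (reconfGraph_adj_update hx' hx'' hx'i).reachable,
    hammingDist_lt_of_apply_eq hi (update_self ..) fun m hm => ?_⟩
  dsimp only at hm ⊢
  by_cases hmi : m = i
  · rwa [hmi]
  by_cases hmj : m = j
  · rw [hmj, hxj]
    exact hyj.symm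
  exact absurd (by rw [update_of_ne hmi, update_of_ne hmj]) hm

end Reconfiguration

theorem urel_reconfigurable_general (c k ℓ : ℕ)
    (h : ℓ < c * (k - 1)) :
    (reconfGraph {x : Fin ℓ → Fin c |
      ∀ a : Fin c, (Finset.univ.filter fun i => x i = a).card < k}).Connected := by
  exact reconfGraph_connected_of_exists_closer (R := colourBounded (Fin ℓ) (Fin c) k)
    (colourBounded_nonempty (by simpa using h)) (colourBounded_exists_closer (by simpa using h))

/-- If `ℓ < c·(k-1)`, then the relation `U(c,k,ℓ)` (tuples `x : Fin ℓ → Fin c` in which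
every colour appears fewer than `k` times) is reconfigurable. -/
theorem urel_reconfigurable (c k ℓ : ℕ) (hc : 0 < c) (hk : 0 < k) (hl : 0 < ℓ)
    (h : ℓ < c * (k - 1)) :
    (reconfGraph {x : Fin ℓ → Fin c |
      ∀ a : Fin c, (Finset.univ.filter fun i => x i = a).card < k}).Connected :=
  urel_reconfigurable_general c k ℓ h
end

section
/- Let k ≥ 3 be an integer and H a finite simple graph. Then there exists a finite simple graph G whose girth is greater than k (in particular G contains no clique on k vertices, so every colouring of G with any number of colours avoids monochromatic k-cliques) and such that there is no graph homomorphism from G to H. -/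
/-!
Erdős's probabilistic argument. In the random graph on `n` vertices with edge probability `r / n`,
`r` a large constant, the expected number of labelled cycles of length at most `k` is at most
`∑ r ^ l`, independently of `n`, while by the union bound an independent set of size `a` appears
with probability at most `2 ^ n (1 - r / n) ^ (a choose 2)`, which is below `1 / 2` once
`n (n + 1) ≤ r (a choose 2)`. Hence some outcome has at most twice the expected number of short
cycles and no independent `a`-set. Deleting one vertex of every short cycle leaves a graph of girth
greater than `k` with more than `c (a - 1)` vertices and no independent `a`-set, so it is not
`c`-colourable. For `c = card W` it admits no homomorphism to `H`, which would be a colouring by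
`card W` colours.
-/

open Finset Fintype

theorem card_filter_forall_mem_mul {E R : Type*} [Fintype E] [DecidableEq E] [Fintype R]
    [DecidableEq R] (S : Finset E) (T : Finset R) :
    #{ω : E → R | ∀ e ∈ S, ω e ∈ T} * card R ^ #S = #T ^ #S * card R ^ card E := by
  have hpi : ({ω : E → R | ∀ e ∈ S, ω e ∈ T} : Finset (E → R)) =
      piFinset fun e ↦ if e ∈ S then T else univ := by
    ext ω
    simp only [mem_filter, mem_univ, true_and, mem_piFinset]
    exact ⟨fun h e ↦ by split_ifs with he <;> simp [h e, *],
      fun h e he ↦ by simpa [he] using h e⟩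
  have hcompl : ({e | e ∉ S} : Finset E) = Sᶜ := by ext; simp
  simp only [hpi, card_piFinset, apply_ite card, card_univ, prod_ite, prod_const,
    filter_mem_eq_inter, univ_inter, hcompl]
  rw [mul_assoc, ← pow_add, card_compl_add_card]

theorem two_mul_card_filter_lt_of_sum_le {ι : Type*} [Fintype ι] (X : ι → ℕ) {K N : ℕ}
    (hN : 0 < N) (h : ∑ i, X i ≤ K * N) : 2 * #{i | 2 * K < X i} < N := by
  have hmarkov : #{i | 2 * K < X i} * (2 * K + 1) ≤ K * N := calc
    #{i | 2 * K < X i} * (2 * K + 1) ≤ ∑ i ∈ {i | 2 * K < X i}, X i := by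
      rw [← smul_eq_mul]; exact card_nsmul_le_sum _ _ _ fun i hi ↦ (mem_filter.mp hi).2
    _ ≤ ∑ i, X i := sum_le_sum_of_subset (filter_subset _ _)
    _ ≤ K * N := h
  exact Nat.lt_of_mul_lt_mul_right (a := 2 * K + 1) (by nlinarith)

theorem two_mul_two_pow_mul_sub_pow_lt {n r m : ℕ} (hn : 0 < n) (hrn : r ≤ n)
    (h : n * (n + 1) ≤ r * m) : 2 * 2 ^ n * (n - r) ^ m < n ^ m := by
  have hn' : (0 : ℝ) < n := by exact_mod_cast hn
  set x : ℝ := r / n * m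
  have hsub : ((n - r : ℕ) : ℝ) ^ m ≤ n ^ m * Real.exp (-x) := by
    have hbase : ((n - r : ℕ) : ℝ) = n * (1 - r / n) := by
      rw [Nat.cast_sub hrn]; field_simp
    have h1 : 1 - (r : ℝ) / n ≤ Real.exp (-(r / n)) := by
      linarith [Real.add_one_le_exp (-(r / n : ℝ))]
    rw [hbase, mul_pow, show -x = -(r / n) * m by ring, Real.exp_mul, Real.rpow_natCast]
    gcongr
    rw [sub_nonneg, div_le_one hn']
    exact_mod_cast hrn
  have htwo : (2 : ℝ) * 2 ^ n < Real.exp x := by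
    have h2 : (2 : ℝ) < Real.exp 1 := by linarith [Real.add_one_lt_exp one_ne_zero]
    have hx : (n : ℝ) + 1 ≤ x := by
      have h' : (n : ℝ) * (n + 1) ≤ r * m := by exact_mod_cast h
      rw [show x = r * m / n by ring, le_div_iff₀ hn']
      linarith
    calc (2 : ℝ) * 2 ^ n = 2 ^ (n + 1) := by ring
      _ < Real.exp 1 ^ (n + 1) := by gcongr
      _ = Real.exp (n + 1) := by rw [← Real.exp_nat_mul]; push_cast; ring_nf
      _ ≤ Real.exp x := Real.exp_le_exp.mpr hx
  have hpos : (0 : ℝ) < n ^ m * Real.exp (-x) := by positivity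
  suffices ((2 * 2 ^ n * (n - r) ^ m : ℕ) : ℝ) < n ^ m by exact_mod_cast this
  calc ((2 * 2 ^ n * (n - r) ^ m : ℕ) : ℝ) = 2 * 2 ^ n * ((n - r : ℕ) : ℝ) ^ m := by
        push_cast; ring
    _ ≤ 2 * 2 ^ n * (n ^ m * Real.exp (-x)) := by gcongr
    _ < Real.exp x * (n ^ m * Real.exp (-x)) := by gcongr
    _ = n ^ m := by rw [mul_left_comm, ← Real.exp_add, add_neg_cancel, Real.exp_zero, mul_one]

/-- `r / n` will be the edge probability, `a` the size of the excluded independent sets and `n`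
the number of vertices. -/
theorem exists_random_graph_parameters (k c : ℕ) :
    ∃ r a n : ℕ, 0 < a ∧ r ≤ n ∧ n * (n + 1) ≤ r * a.choose 2 ∧
      c * (a - 1) + 2 * ∑ l ∈ range (k - 2), r ^ (l + 3) < n := by
  obtain ⟨r, hr⟩ : ∃ r, r = 16 * (c + 1) ^ 2 := ⟨_, rfl⟩
  obtain ⟨K, hK⟩ : ∃ K, ∑ l ∈ range (k - 2), r ^ (l + 3) = K := ⟨_, rfl⟩
  refine ⟨r, 2 * K + r, 2 * (c + 1) * (2 * K + r), ?_⟩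
  rw [hK]
  have hr16 : 16 ≤ r := hr ▸ Nat.le_mul_of_pos_right 16 (by positivity)
  obtain ⟨b, hb⟩ : ∃ b, 2 * K + r = b + 1 := ⟨2 * K + r - 1, by omega⟩
  have hchoose : 2 * (b + 1).choose 2 = (b + 1) * b := by
    rw [Nat.choose_two_right, Nat.add_sub_cancel, mul_comm (b + 1) b,
      Nat.mul_div_cancel' (Nat.even_mul_succ_self b).two_dvd]
  rw [hb, Nat.add_sub_cancel]
  refine ⟨by omega, by nlinarith, ?_, by nlinarith⟩
  have hstep : 2 * (c + 1) * (b + 1) + 1 ≤ 4 * (c + 1) * b := by nlinarith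
  calc 2 * (c + 1) * (b + 1) * (2 * (c + 1) * (b + 1) + 1)
      ≤ 2 * (c + 1) * (b + 1) * (4 * (c + 1) * b) := by gcongr
    _ = 4 * (c + 1) ^ 2 * (2 * ((b + 1) * b)) := by ring
    _ = r * (b + 1).choose 2 := by rw [← hchoose, hr]; ring

namespace SimpleGraph

theorem card_edgeFinset_cycleGraph (l : ℕ) : #(cycleGraph (l + 3)).edgeFinset = l + 3 := by
  have := (cycleGraph (l + 3)).sum_degrees_eq_twice_card_edges
  simp only [cycleGraph_degree_three_le, sum_const, card_univ, Fintype.card_fin,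
    smul_eq_mul] at this
  omega

section LabelGraph

variable {V R α : Type*}

/-- Drawing `ω` uniformly from `Sym2 V → R` makes this the random graph with edge probability
`#T / card R`, so that counting labellings computes probabilities. -/
def labelGraph (T : Finset R) (ω : Sym2 V → R) : SimpleGraph V :=
  fromEdgeSet {e | ω e ∈ T}

instance [DecidableEq V] [DecidableEq R] (T : Finset R) (ω : Sym2 V → R) :
    DecidableRel (labelGraph T ω).Adj :=
  fun v w ↦ decidable_of_iff (ω s(v, w) ∈ T ∧ v ≠ w) (by simp [labelGraph])

theorem labelGraph_adj {T : Finset R} {ω : Sym2 V → R} {v w : V} :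
    (labelGraph T ω).Adj v w ↔ ω s(v, w) ∈ T ∧ v ≠ w := by
  simp [labelGraph]

variable [Fintype V] [DecidableEq V] [Fintype R] [DecidableEq R] [Fintype α]

theorem card_filter_forall_adj_mem_mul (F : SimpleGraph α) [DecidableRel F.Adj] (f : α ↪ V)
    (T : Finset R) :
    #{ω : Sym2 V → R | ∀ x y, F.Adj x y → ω s(f x, f y) ∈ T} * card R ^ #F.edgeFinset =
      #T ^ #F.edgeFinset * card R ^ card (Sym2 V) := by
  have hedges (ω : Sym2 V → R) : (∀ x y, F.Adj x y → ω s(f x, f y) ∈ T) ↔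
      ∀ e ∈ F.edgeFinset.map f.sym2Map, ω e ∈ T := by
    simp only [forall_mem_map, mem_edgeFinset, Sym2.forall, mem_edgeSet,
      Function.Embedding.sym2Map_apply, Sym2.map_mk]
  simp only [hedges]
  rw [← card_map f.sym2Map, card_filter_forall_mem_mul]

theorem labelledCopyCount_eq_card_filter [DecidableEq α] (G : SimpleGraph V) [DecidableRel G.Adj]
    (F : SimpleGraph α) [DecidableRel F.Adj] :
    G.labelledCopyCount F = #{f : α ↪ V | ∀ x y, F.Adj x y → G.Adj (f x) (f y)} := by
  classical
  rw [labelledCopyCount, ← Fintype.card_subtype]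
  convert Fintype.card_congr
    { toFun f := ⟨f.toEmbedding, fun _ _ h ↦ f.toHom.map_adj h⟩
      invFun f := ⟨⟨f.1, f.2 _ _⟩, f.1.injective⟩
      left_inv _ := rfl
      right_inv _ := rfl : Copy F G ≃ {f : α ↪ V // ∀ x y, F.Adj x y → G.Adj (f x) (f y)} }

variable (T : Finset R)

theorem sum_labelledCopyCount_labelGraph_mul [DecidableEq α] (F : SimpleGraph α)
    [DecidableRel F.Adj] :
    (∑ ω : Sym2 V → R, (labelGraph T ω).labelledCopyCount F) * card R ^ #F.edgeFinset =
      (card V).descFactorial (card α) * #T ^ #F.edgeFinset * card R ^ card (Sym2 V) := by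
  have hadj (ω : Sym2 V → R) (f : α ↪ V) :
      (∀ x y, F.Adj x y → (labelGraph T ω).Adj (f x) (f y)) ↔
        ∀ x y, F.Adj x y → ω s(f x, f y) ∈ T :=
    forall₂_congr fun x y ↦ imp_congr_right fun h ↦ by
      rw [labelGraph_adj, and_iff_left (f.injective.ne h.ne)]
  simp only [labelledCopyCount_eq_card_filter, hadj, card_filter]
  rw [sum_comm, sum_mul]
  simp only [← card_filter, card_filter_forall_adj_mem_mul, sum_const, card_univ,
    card_embedding_eq, smul_eq_mul, mul_assoc]

theorem card_filter_isIndepSet_labelGraph_mul (A : Finset V) :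
    #{ω : Sym2 V → R | (labelGraph T ω).IsIndepSet (A : Set V)} * card R ^ (#A).choose 2 =
      #Tᶜ ^ (#A).choose 2 * card R ^ card (Sym2 V) := by
  have hindep (ω : Sym2 V → R) : (labelGraph T ω).IsIndepSet (A : Set V) ↔
      ∀ x y : A, (⊤ : SimpleGraph A).Adj x y → ω s(x.1, y.1) ∈ Tᶜ := by
    simp only [IsIndepSet, Set.Pairwise, mem_coe, labelGraph_adj, top_adj, ne_eq, mem_compl,
      Subtype.forall, Subtype.mk.injEq]
    grind
  have hedges : #(⊤ : SimpleGraph A).edgeFinset = (#A).choose 2 := by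
    rw [card_edgeFinset_top_eq_card_choose_two, Fintype.card_coe]
  simp only [hindep]
  rw [← hedges]
  exact card_filter_forall_adj_mem_mul ⊤ (Function.Embedding.subtype _) Tᶜ

theorem card_filter_exists_isNIndepSet_labelGraph_mul_le (a : ℕ) :
    #{ω : Sym2 V → R | ∃ A, (labelGraph T ω).IsNIndepSet a A} * card R ^ a.choose 2 ≤
      (card V).choose a * #Tᶜ ^ a.choose 2 * card R ^ card (Sym2 V) := calc
  _ ≤ (∑ A ∈ powersetCard a (univ : Finset V),
        #{ω : Sym2 V → R | (labelGraph T ω).IsIndepSet (A : Set V)}) * card R ^ a.choose 2 := by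
    gcongr
    refine (card_le_card fun ω hω ↦ ?_).trans card_biUnion_le
    obtain ⟨A, hA⟩ := (mem_filter.mp hω).2
    exact mem_biUnion.mpr ⟨A, mem_powersetCard.mpr ⟨subset_univ A, hA.card_eq⟩,
      mem_filter.mpr ⟨mem_univ ω, hA.isIndepSet⟩⟩
  _ = _ := by
    rw [sum_mul, Finset.sum_congr rfl fun A hA ↦ (mem_powersetCard.mp hA).2 ▸
      card_filter_isIndepSet_labelGraph_mul T A, sum_const, card_powersetCard, card_univ,
      smul_eq_mul, mul_assoc]

theorem sum_sum_labelledCopyCount_cycleGraph_le [Nonempty R] (hVR : card V ≤ card R) (k : ℕ) :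
    ∑ ω : Sym2 V → R,
        ∑ l ∈ range (k - 2), (labelGraph T ω).labelledCopyCount (cycleGraph (l + 3)) ≤
      (∑ l ∈ range (k - 2), #T ^ (l + 3)) * card R ^ card (Sym2 V) := by
  rw [sum_comm, sum_mul]
  gcongr with l
  refine Nat.le_of_mul_le_mul_right (c := card R ^ (l + 3)) ?_ (by positivity)
  have := sum_labelledCopyCount_labelGraph_mul (V := V) T (cycleGraph (l + 3))
  rw [card_edgeFinset_cycleGraph, Fintype.card_fin] at this
  calc _ = (card V).descFactorial (l + 3) * (#T ^ (l + 3) * card R ^ card (Sym2 V)) := by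
        rw [this, mul_assoc]
    _ ≤ card R ^ (l + 3) * (#T ^ (l + 3) * card R ^ card (Sym2 V)) := by
        gcongr
        exact (Nat.descFactorial_le_pow _ _).trans (Nat.pow_le_pow_left hVR _)
    _ = _ := mul_comm _ _

end LabelGraph

variable {V : Type*} {G : SimpleGraph V}

theorem lt_egirth_of_forall_free {k : ℕ}
    (h : ∀ l, l + 3 ≤ k → (cycleGraph (l + 3)).Free G) : (k : ℕ∞) < G.egirth := by
  have hle : ((k + 1 : ℕ) : ℕ∞) ≤ G.egirth := le_egirth.mpr fun v w hw ↦ by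
    have h3 := hw.three_le_length
    by_contra! hlt
    norm_cast at hlt
    exact h (w.length - 3) (by omega)
      ((cycleGraph_isContained_iff (by omega)).mpr ⟨v, w, hw, by omega⟩)
  exact lt_of_lt_of_le (by exact_mod_cast k.lt_succ_self) hle

theorem Colorable.exists_isNIndepSet [Fintype V] {c m : ℕ} (hc : G.Colorable c)
    (h : c * m < card V) : ∃ s, G.IsNIndepSet (m + 1) s := by
  classical
  obtain ⟨C⟩ := hc
  obtain ⟨y, hy⟩ := Fintype.exists_lt_card_fiber_of_mul_lt_card C (by simpa using h)
  obtain ⟨s, hs, hcard⟩ := exists_subset_card_eq hy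
  refine ⟨s, ⟨fun x hx z hz _ ↦ C.not_adj_of_mem_colorClass (c := y) ?_ ?_, hcard⟩⟩
  · exact (mem_filter.mp (hs hx)).2
  · exact (mem_filter.mp (hs hz)).2

theorem IsNIndepSet.of_induce {s : Set V} {t : Finset s} {n : ℕ}
    (h : (G.induce s).IsNIndepSet n t) :
    G.IsNIndepSet n (t.map (Function.Embedding.subtype _)) := by
  refine ⟨?_, by rw [card_map, h.card_eq]⟩
  rintro _ hx _ hy hne
  simp only [coe_map, Set.mem_image, mem_coe] at hx hy
  obtain ⟨x, hx, rfl⟩ := hx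
  obtain ⟨y, hy, rfl⟩ := hy
  exact h.isIndepSet hx hy (fun e ↦ hne (by rw [e]))

variable [Fintype V] [DecidableEq V]

noncomputable def shortCycleVertices (G : SimpleGraph V) (k : ℕ) : Finset V := by
  classical
  exact (range (k - 2)).biUnion fun l ↦ univ.image fun f : Copy (cycleGraph (l + 3)) G ↦ f 0

theorem card_shortCycleVertices_le (G : SimpleGraph V) (k : ℕ) :
    #(G.shortCycleVertices k) ≤
      ∑ l ∈ range (k - 2), G.labelledCopyCount (cycleGraph (l + 3)) := by
  classical
  refine card_biUnion_le.trans (sum_le_sum fun l _ ↦ card_image_le.trans ?_)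
  rw [card_univ, labelledCopyCount]
  convert le_rfl

theorem lt_egirth_induce_compl_shortCycleVertices (G : SimpleGraph V) (k : ℕ) :
    (k : ℕ∞) < (G.induce (G.shortCycleVertices k : Set V)ᶜ).egirth := by
  classical
  refine lt_egirth_of_forall_free fun l hl ⟨f⟩ ↦ (f 0).2 ?_
  simp only [shortCycleVertices, mem_coe, mem_biUnion, mem_range, mem_image, mem_univ, true_and]
  exact ⟨l, by omega, (Copy.induce G _).comp f, rfl⟩

theorem exists_labelGraph_few_shortCycleVertices_no_isNIndepSet {n a : ℕ} (hn : 0 < n)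
    (k : ℕ) (T : Finset (Fin n)) (h : n * (n + 1) ≤ #T * a.choose 2) :
    ∃ ω : Sym2 (Fin n) → Fin n,
      #((labelGraph T ω).shortCycleVertices k) ≤ 2 * ∑ l ∈ range (k - 2), #T ^ (l + 3) ∧
        ∀ A, ¬(labelGraph T ω).IsNIndepSet a A := by
  set M := card (Sym2 (Fin n))
  set K := ∑ l ∈ range (k - 2), #T ^ (l + 3)
  set X : (Sym2 (Fin n) → Fin n) → ℕ := fun ω ↦
    ∑ l ∈ range (k - 2), (labelGraph T ω).labelledCopyCount (cycleGraph (l + 3))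
  have hpos : 0 < n ^ M := by positivity
  have : Nonempty (Fin n) := ⟨⟨0, hn⟩⟩
  have hcycles : 2 * #{ω | 2 * K < X ω} < n ^ M := two_mul_card_filter_lt_of_sum_le X hpos
    (by simpa using sum_sum_labelledCopyCount_cycleGraph_le T le_rfl k)
  have hindep : 2 * #{ω : Sym2 (Fin n) → Fin n | ∃ A, (labelGraph T ω).IsNIndepSet a A} <
      n ^ M := by
    have hcount := card_filter_exists_isNIndepSet_labelGraph_mul_le (V := Fin n) T a
    have hexp := two_mul_two_pow_mul_sub_pow_lt hn
      (card_le_univ T |>.trans_eq (Fintype.card_fin n)) h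
    rw [card_compl, Fintype.card_fin] at hcount
    refine Nat.lt_of_mul_lt_mul_right (a := n ^ a.choose 2) ?_
    calc _ ≤ 2 * (n.choose a * (n - #T) ^ a.choose 2 * n ^ M) := by rw [mul_assoc]; gcongr
      _ ≤ 2 * 2 ^ n * (n - #T) ^ a.choose 2 * n ^ M := by
        rw [mul_assoc 2 (2 ^ n), mul_assoc 2 (2 ^ n * _)]
        gcongr
        exact Nat.choose_le_two_pow n a
      _ < n ^ a.choose 2 * n ^ M := by gcongr
      _ = _ := mul_comm _ _
  have hcard : #(univ : Finset (Sym2 (Fin n) → Fin n)) = n ^ M := by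
    rw [card_univ, card_fun, Fintype.card_fin]
  obtain ⟨ω, -, hω⟩ := exists_mem_notMem_of_card_lt_card (t := univ)
    (s := ({ω | 2 * K < X ω} : Finset (Sym2 (Fin n) → Fin n)) ∪
      ({ω | ∃ A, (labelGraph T ω).IsNIndepSet a A} : Finset (Sym2 (Fin n) → Fin n)))
    ((card_union_le _ _).trans_lt (by omega))
  simp only [mem_union, mem_filter, mem_univ, true_and, not_or, not_lt] at hω
  exact ⟨ω, (card_shortCycleVertices_le _ k).trans hω.1, not_exists.mp hω.2⟩

theorem exists_lt_egirth_not_colorable (k c : ℕ) :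
    ∃ (V : Type) (_ : Fintype V) (G : SimpleGraph V), k < G.egirth ∧ ¬G.Colorable c := by
  obtain ⟨r, a, n, ha, hrn, hα, hn⟩ := exists_random_graph_parameters k c
  obtain ⟨T, -, rfl⟩ := exists_subset_card_eq (s := (univ : Finset (Fin n))) (n := r)
    (by rwa [card_univ, Fintype.card_fin])
  obtain ⟨ω, hD, hind⟩ :=
    exists_labelGraph_few_shortCycleVertices_no_isNIndepSet (by omega) k T hα
  refine ⟨_, inferInstance, _, (labelGraph T ω).lt_egirth_induce_compl_shortCycleVertices k,
    fun hcol ↦ ?_⟩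
  obtain ⟨A, hA⟩ := hcol.exists_isNIndepSet (m := a - 1)
    (by
      simp only [Fintype.card_compl_set, Fintype.card_fin, coe_sort_coe, Fintype.card_coe]
      omega)
  rw [Nat.sub_add_cancel ha] at hA
  exact hind _ hA.of_induce

end SimpleGraph

theorem high_girth_no_hom_general (k : ℕ) {W : Type*} [Fintype W]
    (H : SimpleGraph W) :
    ∃ (V : Type) (_ : Fintype V) (G : SimpleGraph V),
      (k : ℕ∞) < G.egirth ∧ IsEmpty (G →g H) := by
  obtain ⟨V, hV, G, hgirth, hcol⟩ := SimpleGraph.exists_lt_egirth_not_colorable k (card W)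
  exact ⟨V, hV, G, hgirth, ⟨fun f ↦ hcol (H.colorable_of_fintype.of_hom f)⟩⟩

/-- For every `k ≥ 3` and every finite simple graph `H`, there is a finite simple graph `G`
of girth greater than `k` admitting no graph homomorphism to `H`. -/
theorem high_girth_no_hom (k : ℕ) (hk : 3 ≤ k) {W : Type*} [Fintype W]
    (H : SimpleGraph W) :
    ∃ (V : Type) (_ : Fintype V) (G : SimpleGraph V),
      (k : ℕ∞) < G.egirth ∧ IsEmpty (G →g H) :=
  high_girth_no_hom_general k H
end

section
/- Let A be a finite set and R ⊆ A² a symmetric irreflexive binary relation such that every element of A occurs in some pair of R. Then R is reconfigurable if and only if the simple graph on vertex set A with edge relation R is connected and not bipartite (i.e. admits no proper 2-colouring). -/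
/-- The reconfiguration graph of a binary relation `R ⊆ A²`: vertices are the pairs of `R`,
two pairs being adjacent iff they differ in exactly one coordinate. -/
def pairReconfGraph {A : Type*} (R : Set (A × A)) : SimpleGraph R where
  Adj x y := (x.1.1 = y.1.1 ∧ x.1.2 ≠ y.1.2) ∨ (x.1.1 ≠ y.1.1 ∧ x.1.2 = y.1.2)
  symm := by
    refine ⟨?_⟩
    rintro x y (⟨h1, h2⟩ | ⟨h1, h2⟩)
    · exact Or.inl ⟨h1.symm, Ne.symm h2⟩
    · exact Or.inr ⟨Ne.symm h1, h2.symm⟩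
  loopless := by
    refine ⟨?_⟩
    rintro x (⟨-, h⟩ | ⟨h, -⟩) <;> exact h rfl

/-- The simple graph on `A` whose edge relation is the symmetric irreflexive relation `R`. -/
def relGraph {A : Type*} (R : Set (A × A)) (hsym : ∀ a b : A, (a, b) ∈ R → (b, a) ∈ R)
    (hirr : ∀ a : A, (a, a) ∉ R) : SimpleGraph A where
  Adj a b := (a, b) ∈ R
  symm := ⟨fun a b h => hsym a b h⟩
  loopless := ⟨fun a h => hirr a h⟩

/-!
Inside the reconfiguration graph a pair `(a, b)` can move its first coordinate freely while the
second is fixed, and vice versa; the swap `(a, b) ↦ (b, a)` is a graph homomorphism. So if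
`a ~ m`, then `(a, b)` reaches `(a, m)` and hence the swap of everything `(m, a)` reaches:
following a walk of the graph flips, at each edge, the coordinate in which its current endpoint
sits. Conversely, each step between pairs moves the first coordinate by a walk of length `0` or
`2`. Hence two pairs are reachable from one another iff their first coordinates are joined by a
walk of even length, and all vertices are pairwise joined by even walks iff the graph is
connected and has a closed walk of odd length, i.e. is not bipartite.
-/

namespace SimpleGraph

variable {V : Type*} {G : SimpleGraph V} {u v x : V}

def EvenReachable (G : SimpleGraph V) (u v : V) : Prop :=
  ∃ w : G.Walk u v, Even w.length

theorem EvenReachable.refl (u : V) : G.EvenReachable u u :=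
  ⟨.nil, .zero⟩

theorem EvenReachable.trans (h₁ : G.EvenReachable u x) (h₂ : G.EvenReachable x v) :
    G.EvenReachable u v := by
  obtain ⟨w₁, hw₁⟩ := h₁
  obtain ⟨w₂, hw₂⟩ := h₂
  exact ⟨w₁.append w₂, by rw [Walk.length_append]; exact hw₁.add hw₂⟩

theorem EvenReachable.of_adj_adj (h₁ : G.Adj u x) (h₂ : G.Adj x v) : G.EvenReachable u v :=
  ⟨.cons h₁ (.cons h₂ .nil), by simp⟩

theorem EvenReachable.reachable (h : G.EvenReachable u v) : G.Reachable u v :=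
  let ⟨w, _⟩ := h; ⟨w⟩

theorem not_colorable_two_of_adj_of_evenReachable (hadj : G.Adj u v)
    (h : G.EvenReachable v u) : ¬G.Colorable 2 := by
  obtain ⟨w, hw⟩ := h
  rw [two_colorable_iff_forall_loop_even]
  intro hloops
  have := hloops u (.cons hadj w)
  rw [Walk.length_cons] at this
  exact Nat.not_even_iff_odd.2 hw.add_one this

theorem Connected.evenReachable_of_not_colorable_two (hG : G.Connected)
    (hnc : ¬G.Colorable 2) (u v : V) : G.EvenReachable u v := by
  simp only [two_colorable_iff_forall_loop_even, not_forall, Nat.not_even_iff_odd] at hnc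
  obtain ⟨x, loop, hloop⟩ := hnc
  obtain ⟨p⟩ := hG.preconnected u x
  obtain ⟨q⟩ := hG.preconnected x v
  rcases Nat.even_or_odd (p.length + q.length) with hpq | hpq
  · exact ⟨p.append q, by rwa [Walk.length_append]⟩
  · refine ⟨p.append (loop.append q), ?_⟩
    simp only [Walk.length_append]
    rw [← add_assoc, add_right_comm]
    exact hpq.add_odd hloop

end SimpleGraph

section PairReconfGraph

variable {A : Type*} {R : Set (A × A)}

theorem pairReconfGraph_reachable_of_fst_eq {p q : R} (h : p.1.1 = q.1.1) :
    (pairReconfGraph R).Reachable p q := by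
  by_cases h₂ : p.1.2 = q.1.2
  · rw [Subtype.ext (Prod.ext h h₂)]
  · exact SimpleGraph.Adj.reachable (Or.inl ⟨h, h₂⟩)

variable (hsym : ∀ a b : A, (a, b) ∈ R → (b, a) ∈ R) (hirr : ∀ a : A, (a, a) ∉ R)

def pairReconfGraph.swap : pairReconfGraph R →g pairReconfGraph R where
  toFun p := ⟨(p.1.2, p.1.1), hsym _ _ p.2⟩
  map_rel' := by
    rintro p q (⟨h₁, h₂⟩ | ⟨h₁, h₂⟩)
    · exact Or.inr ⟨h₂, h₁⟩
    · exact Or.inl ⟨h₂, h₁⟩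

theorem pairReconfGraph_reachable_of_walk {u v : A} (w : (relGraph R hsym hirr).Walk u v)
    {p q : R} (hp : p.1.1 = u) (hq : (if Even w.length then q.1.1 else q.1.2) = v) :
    (pairReconfGraph R).Reachable p q := by
  induction w generalizing p q with
  | nil =>
    rw [if_pos .zero] at hq
    exact pairReconfGraph_reachable_of_fst_eq (hp.trans hq.symm)
  | @cons u m v hum w ih =>
    have hpum : (pairReconfGraph R).Reachable p ⟨(u, m), hum⟩ :=
      pairReconfGraph_reachable_of_fst_eq hp
    have hmu :
        (pairReconfGraph R).Reachable ⟨(m, u), hsym _ _ hum⟩ (pairReconfGraph.swap hsym q) :=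
      ih rfl (by
        by_cases hw : Even w.length <;>
          simp only [SimpleGraph.Walk.length_cons, Nat.even_add_one, hw, not_true,
            not_false_eq_true, if_true, if_false] at hq ⊢ <;>
          exact hq)
    exact hpum.trans (hmu.map (pairReconfGraph.swap hsym))

theorem pairReconfGraph_reachable_iff {p q : R} :
    (pairReconfGraph R).Reachable p q ↔ (relGraph R hsym hirr).EvenReachable p.1.1 q.1.1 := by
  constructor
  · rintro ⟨w⟩
    induction w with
    | nil => exact .refl _
    | @cons p r q hpr _ ih =>
      refine .trans ?_ ih
      rcases hpr with ⟨h, -⟩ | ⟨-, h⟩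
      · rw [h]; exact .refl _
      · exact .of_adj_adj (G := relGraph R hsym hirr) p.2 (h ▸ hsym _ _ r.2)
  · rintro ⟨w, hw⟩
    exact pairReconfGraph_reachable_of_walk hsym hirr w rfl (by rw [if_pos hw])

end PairReconfGraph

theorem binary_reconfigurable_iff_general {A : Type*} (R : Set (A × A))
    (hsym : ∀ a b : A, (a, b) ∈ R → (b, a) ∈ R) (hirr : ∀ a : A, (a, a) ∉ R)
    (hcover : ∀ a : A, ∃ b : A, (a, b) ∈ R) :
    (pairReconfGraph R).Connected ↔
      (relGraph R hsym hirr).Connected ∧ ¬(relGraph R hsym hirr).Colorable 2 := by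
  have hreach := @pairReconfGraph_reachable_iff A R hsym hirr
  constructor
  · intro hP
    obtain ⟨⟨⟨a, b⟩, hab⟩⟩ := hP.nonempty
    have : Nonempty A := ⟨a⟩
    refine ⟨⟨fun u v => ?_⟩, ?_⟩
    · obtain ⟨u', hu⟩ := hcover u
      obtain ⟨v', hv⟩ := hcover v
      exact (hreach.1 (hP.preconnected ⟨(u, u'), hu⟩ ⟨(v, v'), hv⟩)).reachable
    · exact SimpleGraph.not_colorable_two_of_adj_of_evenReachable (G := relGraph R hsym hirr)
        hab (hreach.1 (hP.preconnected ⟨(b, a), hsym _ _ hab⟩ ⟨(a, b), hab⟩))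
  · rintro ⟨hG, hnc⟩
    obtain ⟨a⟩ := hG.nonempty
    obtain ⟨b, hab⟩ := hcover a
    have : Nonempty R := ⟨⟨(a, b), hab⟩⟩
    exact ⟨fun p q => hreach.2 (hG.evenReachable_of_not_colorable_two hnc _ _)⟩

/-- A symmetric irreflexive binary relation `R ⊆ A²` in which every element of `A` occurs
is reconfigurable iff the associated simple graph is connected and not 2-colourable
(i.e. not bipartite). -/
theorem binary_reconfigurable_iff {A : Type*} [Fintype A] (R : Set (A × A))
    (hsym : ∀ a b : A, (a, b) ∈ R → (b, a) ∈ R) (hirr : ∀ a : A, (a, a) ∉ R)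
    (hcover : ∀ a : A, ∃ b : A, (a, b) ∈ R) :
    (pairReconfGraph R).Connected ↔
      (relGraph R hsym hirr).Connected ∧ ¬(relGraph R hsym hirr).Colorable 2 :=
  binary_reconfigurable_iff_general R hsym hirr hcover
end

section
/- Let c ≥ 3 be an integer and let LO_c ⊆ (Fin c)³ be the ternary relation consisting of all triples (a₁, a₂, a₃) in which the maximum of the three entries is attained by exactly one coordinate. Then LO_c is reconfigurable: its reconfiguration graph is connected. -/
open Function

section Reconfiguration

variable {A : Type*} {r : ℕ} {R : Set (Fin r → A)}

theorem reconfGraph_reachable_of_forall_ne_eq {x y : R} (i : Fin r)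
    (h : ∀ j ≠ i, x.1 j = y.1 j) : (reconfGraph R).Reachable x y := by
  by_cases hi : x.1 i = y.1 i
  · have : x = y := Subtype.ext <| funext fun j => by
      by_cases hj : j = i
      · exact hj ▸ hi
      · exact h j hj
    exact this ▸ .refl x
  · exact SimpleGraph.Adj.reachable ⟨i, hi, fun j hj => by_contra fun hji => hj (h j hji)⟩

theorem reconfGraph_reachable_of_forall_mem {x y : R}
    (h : ∀ z : Fin r → A, (∀ j, z j = x.1 j ∨ z j = y.1 j) → z ∈ R) :
    (reconfGraph R).Reachable x y := by
  classical
  have hmem (s : Finset (Fin r)) : s.piecewise y.1 x.1 ∈ R :=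
    h _ fun j => s.piecewise_cases y.1 x.1 (fun v => v = x.1 j ∨ v = y.1 j) (.inr rfl) (.inl rfl)
  have key (s : Finset (Fin r)) : (reconfGraph R).Reachable x ⟨_, hmem s⟩ := by
    induction s using Finset.induction_on with
    | empty => exact (Subtype.ext (Finset.piecewise_empty y.1 x.1) : x = ⟨_, hmem ∅⟩) ▸ .refl x
    | insert j s _ ih =>
      exact ih.trans <| reconfGraph_reachable_of_forall_ne_eq j fun k hk =>
        (s.piecewise_insert_of_ne _ _ hk).symm
  exact (Subtype.ext (Finset.piecewise_univ y.1 x.1) : (⟨_, hmem .univ⟩ : R) = y) ▸ key .univ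

end Reconfiguration

section UniqueMax

variable {A : Type*} [LinearOrder A] {r : ℕ}

/-- `LO_c` in arity `r` over an arbitrary linear order of colours. -/
def uniqueMaxRel (r : ℕ) (A : Type*) [LinearOrder A] : Set (Fin r → A) :=
  {x | ∃! i, ∀ j, x j ≤ x i}

theorem mem_uniqueMaxRel_iff {x : Fin r → A} :
    x ∈ uniqueMaxRel r A ↔ ∃ i, ∀ j ≠ i, x j < x i := by
  constructor
  · rintro ⟨i, hi, huniq⟩
    exact ⟨i, fun j hj => (hi j).lt_of_ne fun hji => hj (huniq j fun k => hji ▸ hi k)⟩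
  · rintro ⟨i, hi⟩
    refine ⟨i, fun j => ?_, fun j hj => by_contra fun hji => (hi j hji).not_ge (hj i)⟩
    by_cases hji : j = i
    · exact hji ▸ le_rfl
    · exact (hi j hji).le

theorem mem_uniqueMaxRel_of_le {x y : Fin r → A} {i : Fin r} (hx : ∀ j ≠ i, x j < x i)
    (hyx : y ≤ x) (hyi : y i = x i) : y ∈ uniqueMaxRel r A :=
  mem_uniqueMaxRel_iff.2 ⟨i, fun j hj => hyi ▸ (hyx j).trans_lt (hx j hj)⟩

theorem reconfGraph_uniqueMaxRel_reachable_of_le {x y : uniqueMaxRel r A} {i : Fin r}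
    (hx : ∀ j ≠ i, x.1 j < x.1 i) (hyx : y.1 ≤ x.1) (hyi : y.1 i = x.1 i) :
    (reconfGraph (uniqueMaxRel r A)).Reachable x y :=
  reconfGraph_reachable_of_forall_mem fun _ hz => mem_uniqueMaxRel_of_le hx
    (fun j => (hz j).elim (·.le) fun h => h ▸ hyx j) ((hz i).elim id (·.trans hyi))

variable [OrderBot A]

def peak (i : Fin r) (v : A) : Fin r → A := update ⊥ i v

theorem peak_le_self {x : Fin r → A} {i : Fin r} : peak i (x i) ≤ x :=
  update_le_iff.2 ⟨le_rfl, fun _ _ => bot_le⟩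

theorem peak_mem_uniqueMaxRel {i : Fin r} {v : A} (hv : ⊥ < v) : peak i v ∈ uniqueMaxRel r A :=
  mem_uniqueMaxRel_iff.2 ⟨i, fun j hj => by simpa [peak, hj] using hv⟩

theorem peak_apply_le {i : Fin r} {v : A} (j : Fin r) : peak i v j ≤ v := by
  by_cases hj : j = i <;> simp [peak, hj]

theorem reconfGraph_uniqueMaxRel_reachable_peak [NeZero r] {a b : A} (ha : ⊥ < a) (hab : a < b)
    (x : uniqueMaxRel r A) :
    (reconfGraph (uniqueMaxRel r A)).Reachable x
      ⟨peak 0 b, peak_mem_uniqueMaxRel (ha.trans hab)⟩ := by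
  obtain ⟨i, hx⟩ := mem_uniqueMaxRel_iff.1 x.2
  have hxi : peak i (x.1 i) ∈ uniqueMaxRel r A :=
    mem_uniqueMaxRel_of_le hx peak_le_self (by simp [peak])
  set w := update (peak i a) 0 b
  have hw : ∀ j ≠ 0, w j < w 0 := fun j hj => by simpa [w, hj] using (peak_apply_le j).trans_lt hab
  have hw_mem : w ∈ uniqueMaxRel r A := mem_uniqueMaxRel_iff.2 ⟨0, hw⟩
  have lower_to_peak : (reconfGraph _).Reachable x ⟨_, hxi⟩ :=
    reconfGraph_uniqueMaxRel_reachable_of_le hx peak_le_self (by simp [peak])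
  have set_peak_height : (reconfGraph _).Reachable ⟨_, hxi⟩ ⟨peak i a, peak_mem_uniqueMaxRel ha⟩ :=
    reconfGraph_reachable_of_forall_ne_eq i fun j hj => by simp [peak, hj]
  have raise_zero : (reconfGraph _).Reachable ⟨peak i a, peak_mem_uniqueMaxRel ha⟩ ⟨w, hw_mem⟩ :=
    reconfGraph_reachable_of_forall_ne_eq 0 fun j hj => (update_of_ne hj _ _).symm
  have lower_to_hub : (reconfGraph _).Reachable ⟨w, hw_mem⟩
      ⟨peak 0 b, peak_mem_uniqueMaxRel (ha.trans hab)⟩ :=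
    reconfGraph_uniqueMaxRel_reachable_of_le hw
      (update_le_iff.2 ⟨by simp [w], fun _ _ => bot_le⟩) (by simp [peak, w])
  exact lower_to_peak.trans <| set_peak_height.trans <| raise_zero.trans lower_to_hub

theorem reconfGraph_uniqueMaxRel_connected [NeZero r] {a b : A} (ha : ⊥ < a) (hab : a < b) :
    (reconfGraph (uniqueMaxRel r A)).Connected :=
  (SimpleGraph.connected_iff_exists_forall_reachable _).2
    ⟨_, fun x => (reconfGraph_uniqueMaxRel_reachable_peak ha hab x).symm⟩

end UniqueMax

/-- For `c ≥ 3`, the ternary linearly-ordered colouring relation `LO_c` — all triples in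
which the maximum entry is attained by exactly one coordinate — is reconfigurable. -/
theorem lo_reconfigurable (c : ℕ) (hc : 3 ≤ c) :
    (reconfGraph {x : Fin 3 → Fin c | ∃! i : Fin 3, ∀ j : Fin 3, x j ≤ x i}).Connected := by
  have : NeZero c := ⟨by omega⟩
  exact reconfGraph_uniqueMaxRel_connected (a := (⟨1, by omega⟩ : Fin c)) (b := ⟨2, by omega⟩)
    (by simp [bot_eq_zero, Fin.lt_def]) (by simp [Fin.lt_def])
end
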